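/- Let μ be a probability measure on ℝ^d with μ(|·|^q) < ∞ for some q > p > 0, and let α ∈ (0,1). For T ≥ 2 define 𝒦_α(T) := ∑_{n≥0} 2^{pn} ∑_{ℓ≥0} 2^{−pℓ} ∑_{F ∈ 𝒫_ℓ} min{ μ(2ⁿF ∩ B_n), T^{−1/2} μ(2ⁿF ∩ B_n)^α }. Set γ := max{ α, 1 − p/d } ∈ (0,1). Then there is a constant C > 0 (depending only on p, q, d, α and μ) such that for all T > 2: 𝒦_α(T) ≤ C T^{ −(1 − max{γ, p/q}) / (2(1−α)) } · A · B, where A := log T if γq = p and A := 1 otherwise, and B := log T if p = (1−α)d and B := 1 otherwise. -/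

import Mathlib

open MeasureTheory Filter ENNReal Topology

noncomputable section

/-- The optimal transport cost `𝒯_p(ν₀, ν₁) = inf_{π ∈ 𝒞(ν₀,ν₁)} ∫ |x-y|^p dπ(x,y)`. -/
def Tcost {d : ℕ} (p : ℝ) (ν₀ ν₁ : Measure (EuclideanSpace ℝ (Fin d))) : ℝ≥0∞ :=
  ⨅ (π : Measure (EuclideanSpace ℝ (Fin d) × EuclideanSpace ℝ (Fin d)))
    (_ : π.map Prod.fst = ν₀) (_ : π.map Prod.snd = ν₁),
      ∫⁻ z, ENNReal.ofReal (‖z.1 - z.2‖ ^ p) ∂π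

/-- The cube of the natural partition `𝒫_ℓ` of `(-1,1]^d` into `2^{dℓ}` dyadic cubes of
side-length `2·2^{-ℓ}`, indexed by `k : Fin d → Fin (2^ℓ)`. -/
def dyadicCube (d ℓ : ℕ) (k : Fin d → Fin (2 ^ ℓ)) : Set (EuclideanSpace ℝ (Fin d)) :=
  {x | ∀ i, x i ∈ Set.Ioc ((-1 : ℝ) + 2 * (2 : ℝ) ^ (-(ℓ : ℝ)) * (k i : ℝ))
      ((-1 : ℝ) + 2 * (2 : ℝ) ^ (-(ℓ : ℝ)) * ((k i : ℝ) + 1))}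

/-- The sets `B₀ = (-1,1]^d` and `B_n = (-2ⁿ,2ⁿ]^d \ (-2^{n-1},2^{n-1}]^d` for `n ≥ 1`. -/
def annulus (d n : ℕ) : Set (EuclideanSpace ℝ (Fin d)) :=
  if n = 0 then {x | ∀ i, x i ∈ Set.Ioc (-1 : ℝ) 1}
  else {x | ∀ i, x i ∈ Set.Ioc (-((2 : ℝ) ^ n)) ((2 : ℝ) ^ n)} \
    {x | ∀ i, x i ∈ Set.Ioc (-((2 : ℝ) ^ (n - 1))) ((2 : ℝ) ^ (n - 1))}

/-- The scaled set `c F = {c x : x ∈ F}`. -/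
def scaleSet {d : ℕ} (c : ℝ) (F : Set (EuclideanSpace ℝ (Fin d))) :
    Set (EuclideanSpace ℝ (Fin d)) :=
  (fun x => c • x) '' F

/-!
Summing over the cubes of `𝒫_ℓ` first, disjointness and the power-mean inequality
`∑ μ(E)^α ≤ #𝒫_ℓ^{1-α} (∑ μ(E))^α` bound the `(n, ℓ)` term by
`min(m_n 2^{-pℓ}, T^{-1/2} m_n^α 2^{(d(1-α)-p)ℓ})`, where `m_n = μ(B_n)`.
Both the sum over `ℓ` and then the sum over `n` are series `∑ₙ min(x 2^{-an}, y 2^{cn})`;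
split where the two geometric sequences cross, such a series is `≲ x^{1-e} y^e` with
`e = a/(a + c⁺)`, times `log(x/y)` in the critical case `c = 0`.
For the outer sum Markov's inequality gives `m_n ≤ M 2^{-qn}`, and the exponents `γ` and
`max(γ, p/q)` are what the two balancing steps produce.
-/

open Function

def minGeomSum (a c x y : ℝ) : ℝ≥0∞ :=
  ∑' n : ℕ, ENNReal.ofReal (min (x * 2 ^ (-(a * n))) (y * 2 ^ (c * n)))

lemma one_div_one_sub_two_rpow_pos {b : ℝ} (hb : b < 0) : 0 < 1 / (1 - (2 : ℝ) ^ b) := by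
  have := Real.rpow_lt_one_of_one_lt_of_neg one_lt_two hb
  rw [one_div_pos]
  linarith

lemma tsum_ofReal_mul_two_rpow {b : ℝ} (hb : b < 0) {x : ℝ} (hx : 0 ≤ x) :
    ∑' n : ℕ, ENNReal.ofReal (x * 2 ^ (b * n)) = ENNReal.ofReal (x / (1 - 2 ^ b)) := by
  have h1 : (2 : ℝ) ^ b < 1 := Real.rpow_lt_one_of_one_lt_of_neg one_lt_two hb
  have h0 : (0 : ℝ) ≤ 2 ^ b := by positivity
  have hsum := (summable_geometric_of_lt_one h0 h1).mul_left x
  simp_rw [Real.rpow_mul_natCast zero_le_two]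
  rw [← ENNReal.ofReal_tsum_of_nonneg (fun n => by positivity) hsum, tsum_mul_left,
    tsum_geometric_of_lt_one h0 h1, div_eq_mul_inv]

lemma minGeomSum_le_left {a : ℝ} (c : ℝ) {x : ℝ} (y : ℝ) (ha : 0 < a) (hx : 0 ≤ x) :
    minGeomSum a c x y ≤ ENNReal.ofReal (x / (1 - 2 ^ (-a))) := by
  rw [← tsum_ofReal_mul_two_rpow (neg_lt_zero.2 ha) hx]
  refine ENNReal.tsum_le_tsum fun n => ENNReal.ofReal_le_ofReal ?_
  rw [neg_mul]
  exact min_le_left _ _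

lemma minGeomSum_le_right_of_neg (a : ℝ) {c : ℝ} (x : ℝ) {y : ℝ} (hc : c < 0) (hy : 0 ≤ y) :
    minGeomSum a c x y ≤ ENNReal.ofReal (y / (1 - 2 ^ c)) := by
  rw [← tsum_ofReal_mul_two_rpow hc hy]
  exact ENNReal.tsum_le_tsum fun n => ENNReal.ofReal_le_ofReal (min_le_right _ _)

lemma tsum_min_two_rpow_sub_le {a c : ℝ} (ha : 0 < a) (hc : 0 ≤ c) (r : ℝ) :
    ∑' n : ℕ, ENNReal.ofReal (min (2 ^ (-(a * (n - r)))) (2 ^ (c * (n - r)))) ≤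
      ENNReal.ofReal (∑ j ∈ Finset.range ⌈r⌉₊, ((2 : ℝ) ^ (-c)) ^ j + 1 / (1 - 2 ^ (-a))) := by
  set N := ⌈r⌉₊
  set f : ℕ → ℝ≥0∞ := fun n => ENNReal.ofReal (min (2 ^ (-(a * (n - r)))) (2 ^ (c * (n - r))))
  have head : ∀ n ∈ Finset.range N, f n ≤ ENNReal.ofReal (((2 : ℝ) ^ (-c)) ^ (N - 1 - n)) := by
    intro n hn
    have hnN : n + 1 ≤ N := Finset.mem_range.1 hn
    have hNr : (N : ℝ) < r + 1 := Nat.ceil_lt_add_one (Nat.ceil_pos.1 (by omega)).le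
    refine ENNReal.ofReal_le_ofReal ((min_le_right _ _).trans ?_)
    rw [← Real.rpow_mul_natCast zero_le_two, Nat.cast_sub (by omega), Nat.cast_sub (by omega)]
    refine Real.rpow_le_rpow_of_exponent_le one_le_two ?_
    push_cast
    nlinarith
  have tail : ∀ i : ℕ, f (i + N) ≤ ENNReal.ofReal (1 * 2 ^ (-a * i)) := by
    intro i
    refine ENNReal.ofReal_le_ofReal ((min_le_left _ _).trans ?_)
    rw [one_mul]
    refine Real.rpow_le_rpow_of_exponent_le one_le_two ?_
    push_cast
    nlinarith [Nat.le_ceil r]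
  rw [← ENNReal.summable.sum_add_tsum_nat_add' (k := N),
    ENNReal.ofReal_add (by positivity) (one_div_one_sub_two_rpow_pos (neg_lt_zero.2 ha)).le,
    ENNReal.ofReal_sum_of_nonneg (fun j _ => by positivity),
    ← Finset.sum_range_reflect (fun j => ENNReal.ofReal (((2 : ℝ) ^ (-c)) ^ j)),
    ← tsum_ofReal_mul_two_rpow (neg_lt_zero.2 ha) zero_le_one]
  exact add_le_add (Finset.sum_le_sum head) (ENNReal.tsum_le_tsum tail)

lemma minGeomSum_le_of_nonneg {a c x y r : ℝ} (ha : 0 < a) (hc : 0 ≤ c) (hy : 0 ≤ y)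
    (hr : x = y * 2 ^ ((a + c) * r)) :
    minGeomSum a c x y ≤ ENNReal.ofReal (y * 2 ^ (c * r) *
      (∑ j ∈ Finset.range ⌈r⌉₊, ((2 : ℝ) ^ (-c)) ^ j + 1 / (1 - 2 ^ (-a)))) := by
  have hG : 0 ≤ y * 2 ^ (c * r) := by positivity
  -- both sequences take the value `y 2^{cr}` at `n = r`
  have hmin : ∀ n : ℕ, min (x * 2 ^ (-(a * n))) (y * 2 ^ (c * n)) =
      y * 2 ^ (c * r) * min (2 ^ (-(a * (n - r)))) (2 ^ (c * (n - r))) := by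
    intro n
    simp only [mul_min_of_nonneg _ _ hG, hr, mul_assoc, ← Real.rpow_add two_pos]
    ring_nf
  simp only [minGeomSum, hmin, ENNReal.ofReal_mul hG, ENNReal.tsum_mul_left]
  gcongr
  exact tsum_min_two_rpow_sub_le ha hc r

lemma geom_sum_two_rpow_neg_le {c : ℝ} (hc : 0 < c) (N : ℕ) :
    ∑ j ∈ Finset.range N, ((2 : ℝ) ^ (-c)) ^ j ≤ 1 / (1 - 2 ^ (-c)) := by
  have h1 : (2 : ℝ) ^ (-c) < 1 := Real.rpow_lt_one_of_one_lt_of_neg one_lt_two (neg_lt_zero.2 hc)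
  have h0 : (0 : ℝ) ≤ 2 ^ (-c) := by positivity
  rw [one_div, ← tsum_geometric_of_lt_one h0 h1]
  exact (summable_geometric_of_lt_one h0 h1).sum_le_tsum _ fun j _ => by positivity

lemma minGeomSum_le_of_pos {a c x y : ℝ} (ha : 0 < a) (hc : 0 < c) (hx : 0 < x) (hy : 0 < y) :
    minGeomSum a c x y ≤ ENNReal.ofReal ((1 / (1 - 2 ^ (-c)) + 1 / (1 - 2 ^ (-a))) *
      (x ^ (c / (a + c)) * y ^ (a / (a + c)))) := by
  have hac : 0 < a + c := by linarith
  set r := Real.logb 2 (x / y) / (a + c)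
  have hr : x = y * 2 ^ ((a + c) * r) := by
    rw [mul_div_cancel₀ _ hac.ne', Real.rpow_logb two_pos (by norm_num) (div_pos hx hy)]
    field_simp
  have hG : y * 2 ^ (c * r) = x ^ (c / (a + c)) * y ^ (a / (a + c)) := by
    rw [show c * r = Real.logb 2 (x / y) * (c / (a + c)) by ring, Real.rpow_mul zero_le_two,
      Real.rpow_logb two_pos (by norm_num) (div_pos hx hy), Real.div_rpow hx.le hy.le,
      show a / (a + c) = 1 - c / (a + c) by field_simp; ring, Real.rpow_sub hy, Real.rpow_one]
    field_simp
  calc minGeomSum a c x y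
      ≤ ENNReal.ofReal (y * 2 ^ (c * r) *
          (∑ j ∈ Finset.range ⌈r⌉₊, ((2 : ℝ) ^ (-c)) ^ j + 1 / (1 - 2 ^ (-a)))) :=
        minGeomSum_le_of_nonneg ha hc.le hy.le hr
    _ ≤ _ := by
        rw [hG, mul_comm]
        gcongr
        exact geom_sum_two_rpow_neg_le hc _

lemma minGeomSum_zero_le {a s x y T : ℝ} (ha : 0 < a) (hs : 0 ≤ s) (hx : 0 < x) (hy : 0 < y)
    (hT : 2 ≤ T) (hxy : x ≤ y * T ^ s) :
    minGeomSum a 0 x y ≤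
      ENNReal.ofReal ((s / a + 1 + 1 / (1 - 2 ^ (-a))) / Real.log 2 * Real.log T * y) := by
  set r := Real.logb 2 (x / y) / a
  have hr : x = y * 2 ^ ((a + 0) * r) := by
    rw [add_zero, mul_div_cancel₀ _ ha.ne', Real.rpow_logb two_pos (by norm_num) (div_pos hx hy)]
    field_simp
  have hlogT : 1 ≤ Real.logb 2 T := by
    rw [Real.le_logb_iff_rpow_le one_lt_two (by linarith)]
    simpa using hT
  have hrT : r ≤ s / a * Real.logb 2 T := by
    have hxyT : x / y ≤ T ^ s := by rwa [div_le_iff₀ hy, mul_comm]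
    have := Real.logb_le_logb_of_le one_lt_two (div_pos hx hy) hxyT
    rw [Real.logb_rpow_eq_mul_logb_of_pos (by linarith)] at this
    rw [div_mul_eq_mul_div, div_le_div_iff_of_pos_right ha]
    exact this
  have hN : (⌈r⌉₊ : ℝ) ≤ s / a * Real.logb 2 T + 1 := by
    have := (Nat.cast_le.2 (Nat.ceil_mono (le_max_left r 0))).trans_lt
      (Nat.ceil_lt_add_one (R := ℝ) (le_max_right r 0))
    have : max r 0 ≤ s / a * Real.logb 2 T := max_le hrT (by positivity)
    linarith
  have hK := (one_div_one_sub_two_rpow_pos (neg_lt_zero.2 ha)).le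
  calc minGeomSum a 0 x y
      ≤ ENNReal.ofReal (y * 2 ^ (0 * r) *
          (∑ j ∈ Finset.range ⌈r⌉₊, ((2 : ℝ) ^ (-0 : ℝ)) ^ j + 1 / (1 - 2 ^ (-a)))) :=
        minGeomSum_le_of_nonneg ha le_rfl hy.le hr
    _ ≤ _ := by
        refine ENNReal.ofReal_le_ofReal ?_
        simp only [zero_mul, neg_zero, Real.rpow_zero, one_pow, Finset.sum_const,
          Finset.card_range, nsmul_eq_mul, mul_one]
        rw [← Real.log_div_log] at hN hlogT
        rw [mul_comm _ y, div_mul_eq_mul_div, mul_div_assoc]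
        gcongr
        nlinarith [mul_nonneg (div_nonneg hs ha.le) (sub_nonneg.2 hlogT)]

theorem exists_minGeomSum_le_mul_rpow {a : ℝ} (c : ℝ) {s : ℝ} (ha : 0 < a) (hs : 0 ≤ s) :
    ∃ K > 0, ∀ x y T : ℝ, 0 < x → 0 < y → 2 ≤ T → x ≤ y * T ^ s →
      minGeomSum a c x y ≤ ENNReal.ofReal (K * (if c = 0 then Real.log T else 1) *
        (x ^ (1 - a / (a + max c 0)) * y ^ (a / (a + max c 0)))) := by
  rcases lt_trichotomy c 0 with hc | rfl | hc
  · refine ⟨_, one_div_one_sub_two_rpow_pos hc, fun x y T _ hy _ _ => ?_⟩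
    simp only [hc.ne, if_false, max_eq_right hc.le, add_zero, div_self ha.ne', sub_self,
      Real.rpow_zero, Real.rpow_one, one_mul, mul_one]
    exact (minGeomSum_le_right_of_neg a x hc hy.le).trans_eq (by rw [one_div_mul_eq_div])
  · have hKa := one_div_one_sub_two_rpow_pos (neg_lt_zero.2 ha)
    refine ⟨(s / a + 1 + 1 / (1 - 2 ^ (-a))) / Real.log 2, by positivity,
      fun x y T hx hy hT hxy => ?_⟩
    simpa [div_self ha.ne'] using minGeomSum_zero_le ha hs hx hy hT hxy
  · refine ⟨_, add_pos (one_div_one_sub_two_rpow_pos (neg_lt_zero.2 hc))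
      (one_div_one_sub_two_rpow_pos (neg_lt_zero.2 ha)), fun x y T hx hy _ _ => ?_⟩
    rw [if_neg hc.ne', max_eq_left hc.le, mul_one,
      show 1 - a / (a + c) = c / (a + c) by field_simp; ring]
    exact minGeomSum_le_of_pos ha hc hx hy

lemma log_two_le_ite_log {P : Prop} [Decidable P] {T : ℝ} (hT : 2 ≤ T) :
    Real.log 2 ≤ if P then Real.log T else 1 := by
  split_ifs
  · exact Real.log_le_log two_pos hT
  · linarith [Real.log_two_lt_d9]

lemma ite_log_nonneg {P : Prop} [Decidable P] {T : ℝ} (hT : 2 ≤ T) :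
    0 ≤ if P then Real.log T else 1 :=
  (Real.log_pos one_lt_two).le.trans (log_two_le_ite_log hT)

theorem exists_minGeomSum_le {a : ℝ} (c : ℝ) {s : ℝ} (ha : 0 < a) (hs : 0 ≤ s) :
    ∃ K > 0, ∀ x y T : ℝ, 0 ≤ x → 0 ≤ y → 2 ≤ T → x ≤ y * T ^ s →
      minGeomSum a c x y ≤ ENNReal.ofReal (K * (if c = 0 then Real.log T else 1) *
        min x (x ^ (1 - a / (a + max c 0)) * y ^ (a / (a + max c 0)))) := by
  obtain ⟨K, hK, hG⟩ := exists_minGeomSum_le_mul_rpow c ha hs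
  refine ⟨max (1 / (1 - 2 ^ (-a)) / Real.log 2) K, lt_max_of_lt_right hK,
    fun x y T hx hy hT hxy => ?_⟩
  rcases hx.eq_or_lt with rfl | hx
  · simp [minGeomSum, min_eq_left (by positivity : (0 : ℝ) ≤ y * 2 ^ (c * _))]
  have hy : 0 < y := pos_of_mul_pos_left (hx.trans_le hxy) (by positivity)
  have hL0 : 0 ≤ if c = 0 then Real.log T else 1 := ite_log_nonneg hT
  calc minGeomSum a c x y
      ≤ min (ENNReal.ofReal (x / (1 - 2 ^ (-a)))) (ENNReal.ofReal (K *
          (if c = 0 then Real.log T else 1) *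
          (x ^ (1 - a / (a + max c 0)) * y ^ (a / (a + max c 0))))) :=
        le_min (minGeomSum_le_left c y ha hx.le) (hG x y T hx hy hT hxy)
    _ ≤ _ := by
        rw [← ENNReal.ofReal_min, mul_min_of_nonneg _ _ (by positivity)]
        refine ENNReal.ofReal_le_ofReal (min_le_min ?_ ?_)
        · calc x / (1 - 2 ^ (-a)) = 1 / (1 - 2 ^ (-a)) / Real.log 2 * Real.log 2 * x := by
                field_simp
            _ ≤ _ := by gcongr; exacts [le_max_left _ _, log_two_le_ite_log hT]
        · exact mul_le_mul_of_nonneg_right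
            (mul_le_mul_of_nonneg_right (le_max_right _ _) hL0) (by positivity)

lemma div_add_max_mul_sub_eq {a b w : ℝ} (ha : 0 < a) (hb : 0 < b) (hw : 0 < w) :
    a / (a + max (b * w - a) 0) = (1 - max (1 - w) (1 - a / b)) / w := by
  rw [← min_sub_sub_left, sub_sub_cancel (1 : ℝ), sub_sub_cancel (1 : ℝ), ← min_div_div_right hw.le,
    div_self hw.ne', div_div]
  rcases le_total a (b * w) with h | h
  · rw [max_eq_left (sub_nonneg.2 h), add_sub_cancel,
      min_eq_right ((div_le_one (by positivity)).2 h)]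
  · rw [max_eq_right (sub_nonpos.2 h), add_zero, div_self ha.ne',
      min_eq_left ((one_le_div (by positivity)).2 h)]

lemma rpow_one_sub_mul_mul_rpow_le {M u γ e θ : ℝ} (hM : 1 ≤ M) (hu : 0 ≤ u) (hγ : γ ≤ 1)
    (he : 0 ≤ e) : M ^ (1 - e) * (u ^ θ * M ^ γ) ^ e ≤ M * u ^ (θ * e) := by
  have hM0 : 0 ≤ M := zero_le_one.trans hM
  rw [Real.mul_rpow (by positivity) (by positivity), ← Real.rpow_mul hu, ← Real.rpow_mul hM0,
    mul_left_comm, ← Real.rpow_add (by linarith), mul_comm]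
  gcongr
  exact (Real.rpow_le_rpow_of_exponent_le hM (by nlinarith)).trans_eq (Real.rpow_one M)

lemma measurableSet_setOf_forall_mem_Ioc {d : ℕ} (a b : Fin d → ℝ) :
    MeasurableSet {x : EuclideanSpace ℝ (Fin d) | ∀ i, x i ∈ Set.Ioc (a i) (b i)} := by
  simp only [Set.ofPred_forall]
  exact MeasurableSet.iInter fun i => measurableSet_Ioc.preimage (by fun_prop)

lemma measurableSet_dyadicCube (d ℓ : ℕ) (k : Fin d → Fin (2 ^ ℓ)) :
    MeasurableSet (dyadicCube d ℓ k) :=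
  measurableSet_setOf_forall_mem_Ioc _ _

lemma measurableSet_annulus (d n : ℕ) : MeasurableSet (annulus d n) := by
  unfold annulus
  split_ifs
  · exact measurableSet_setOf_forall_mem_Ioc _ _
  · exact (measurableSet_setOf_forall_mem_Ioc _ _).diff (measurableSet_setOf_forall_mem_Ioc _ _)

lemma measurableSet_scaleSet {d : ℕ} {c : ℝ} (hc : c ≠ 0) {F : Set (EuclideanSpace ℝ (Fin d))}
    (hF : MeasurableSet F) : MeasurableSet (scaleSet c F) :=
  (Homeomorph.smulOfNeZero c hc).toMeasurableEquiv.measurableSet_image.2 hF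

lemma disjoint_scaleSet {d : ℕ} {c : ℝ} (hc : c ≠ 0) {F G : Set (EuclideanSpace ℝ (Fin d))}
    (h : Disjoint F G) : Disjoint (scaleSet c F) (scaleSet c G) :=
  (Set.disjoint_image_iff (smul_right_injective _ hc)).2 h

lemma pairwise_disjoint_dyadicCube (d ℓ : ℕ) : Pairwise (Disjoint on dyadicCube d ℓ) := by
  have key : ∀ k k' : Fin d → Fin (2 ^ ℓ), ∀ i, k i < k' i →
      Disjoint (dyadicCube d ℓ k) (dyadicCube d ℓ k') := by
    intro k k' i hi
    have hk : ((k i : ℕ) : ℝ) + 1 ≤ (k' i : ℕ) := by exact_mod_cast hi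
    have hw : (0 : ℝ) < 2 * 2 ^ (-(ℓ : ℝ)) := by positivity
    refine Set.disjoint_left.2 fun x hx hx' => ?_
    have h1 := (hx i).2
    have h2 := (hx' i).1
    nlinarith
  intro k k' hne
  obtain ⟨i, hi⟩ := Function.ne_iff.1 hne
  rcases lt_or_gt_of_ne hi with h | h
  · exact key k k' i h
  · exact (key k' k i h).symm

lemma sum_rpow_le_card_rpow_mul_rpow_sum {ι : Type*} (s : Finset ι) (f : ι → ℝ≥0∞) {α : ℝ}
    (hα0 : 0 < α) (hα1 : α ≤ 1) :
    ∑ i ∈ s, f i ^ α ≤ (s.card : ℝ≥0∞) ^ (1 - α) * (∑ i ∈ s, f i) ^ α := by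
  simpa [← ENNReal.rpow_mul, mul_inv_cancel₀ hα0.ne'] using
    ENNReal.inner_le_weight_mul_Lp_of_nonneg s ((one_le_inv₀ hα0).2 hα1) 1 (fun i => f i ^ α)

lemma sum_min_measure_rpow_le {X ι : Type*} [MeasurableSpace X] [Fintype ι] (μ : Measure X)
    {E : ι → Set X} {A : Set X} (hE : ∀ i, MeasurableSet (E i))
    (hdisj : Pairwise (Disjoint on E)) (hEA : ∀ i, E i ⊆ A) (t : ℝ≥0∞) {α : ℝ}
    (hα0 : 0 < α) (hα1 : α ≤ 1) :
    ∑ i, min (μ (E i)) (t * μ (E i) ^ α) ≤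
      min (μ A) (t * (Fintype.card ι : ℝ≥0∞) ^ (1 - α) * μ A ^ α) := by
  have hsum : ∑ i, μ (E i) ≤ μ A := by
    rw [← tsum_fintype (L := SummationFilter.unconditional ι), ← measure_iUnion hdisj hE]
    exact measure_mono (Set.iUnion_subset hEA)
  refine le_min ((Finset.sum_le_sum fun i _ => min_le_left _ _).trans hsum)
    ((Finset.sum_le_sum fun i _ => min_le_right _ _).trans ?_)
  rw [← Finset.mul_sum, mul_assoc]
  gcongr
  exact (sum_rpow_le_card_rpow_mul_rpow_sum _ _ hα0 hα1).trans (by rw [Finset.card_univ]; gcongr)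

lemma annulus_subset_setOf_le_norm {d n : ℕ} (hn : n ≠ 0) :
    annulus d n ⊆ {x | (2 : ℝ) ^ (n - 1) ≤ ‖x‖} := by
  intro x hx
  rw [annulus, if_neg hn] at hx
  obtain ⟨i, hi⟩ : ∃ i, x i ∉ Set.Ioc (-(2 : ℝ) ^ (n - 1)) (2 ^ (n - 1)) := by
    simpa using hx.2
  have habs : (2 : ℝ) ^ (n - 1) ≤ |x i| := by
    rw [Set.mem_Ioc, not_and_or, not_lt, not_le] at hi
    rcases hi with h | h
    · linarith [neg_abs_le (x i)]
    · linarith [le_abs_self (x i)]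
  exact habs.trans (PiLp.norm_apply_le x i)

lemma measureReal_annulus_le {d : ℕ} (μ : Measure (EuclideanSpace ℝ (Fin d)))
    [IsProbabilityMeasure μ] {q : ℝ} (hq : 0 < q)
    (hmom : ∫⁻ x, ENNReal.ofReal (‖x‖ ^ q) ∂μ < ⊤) (n : ℕ) :
    μ.real (annulus d n) ≤
      max 1 (2 ^ q * (∫⁻ x, ENNReal.ofReal (‖x‖ ^ q) ∂μ).toReal) * 2 ^ (-(q * n)) := by
  set I := ∫⁻ x, ENNReal.ofReal (‖x‖ ^ q) ∂μ
  rcases eq_or_ne n 0 with rfl | hn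
  · simp
  set ε : ℝ := ((2 : ℝ) ^ (n - 1)) ^ q
  have hmarkov : ENNReal.ofReal ε * μ (annulus d n) ≤ I := by
    refine le_trans ?_ (mul_meas_ge_le_lintegral₀ (by fun_prop) (ENNReal.ofReal ε))
    gcongr
    intro x hx
    exact ENNReal.ofReal_le_ofReal
      (Real.rpow_le_rpow (by positivity) (annulus_subset_setOf_le_norm hn hx) hq.le)
  have hmarkov' : ε * μ.real (annulus d n) ≤ I.toReal := by
    have := ENNReal.toReal_mono hmom.ne hmarkov
    rwa [ENNReal.toReal_mul, ENNReal.toReal_ofReal (by positivity)] at this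
  have hε : (2 : ℝ) ^ q * 2 ^ (-(q * n)) * ε = 1 := by
    simp only [ε]
    rw [← Real.rpow_natCast, Nat.cast_sub (Nat.one_le_iff_ne_zero.2 hn),
      ← Real.rpow_mul zero_le_two, ← Real.rpow_add two_pos, ← Real.rpow_add two_pos,
      show q + -(q * n) + (n - (1 : ℕ)) * q = 0 by push_cast; ring, Real.rpow_zero]
  calc μ.real (annulus d n) = 2 ^ q * 2 ^ (-(q * n)) * (ε * μ.real (annulus d n)) := by
        rw [← mul_assoc, hε, one_mul]
    _ ≤ 2 ^ q * 2 ^ (-(q * n)) * I.toReal := by gcongr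
    _ ≤ _ := by
        rw [mul_right_comm]
        gcongr
        exact le_max_right _ _

lemma tsum_sum_min_measure_le_minGeomSum {d : ℕ} (μ : Measure (EuclideanSpace ℝ (Fin d)))
    [IsFiniteMeasure μ] (p : ℝ) {α t : ℝ} (hα0 : 0 < α) (hα1 : α ≤ 1) (ht : 0 ≤ t) (n : ℕ) :
    ∑' ℓ : ℕ, ENNReal.ofReal ((2 : ℝ) ^ (-(p * ℓ))) *
        ∑ k : Fin d → Fin (2 ^ ℓ),
          min (μ (scaleSet ((2 : ℝ) ^ n) (dyadicCube d ℓ k) ∩ annulus d n))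
            (ENNReal.ofReal t * μ (scaleSet ((2 : ℝ) ^ n) (dyadicCube d ℓ k) ∩ annulus d n) ^ α) ≤
      minGeomSum p (d * (1 - α) - p) (μ.real (annulus d n)) (t * μ.real (annulus d n) ^ α) := by
  refine ENNReal.tsum_le_tsum fun ℓ => ?_
  have h2n : (2 : ℝ) ^ n ≠ 0 := by positivity
  have hpieces := sum_min_measure_rpow_le μ (A := annulus d n)
    (fun k => (measurableSet_scaleSet h2n (measurableSet_dyadicCube d ℓ k)).inter
      (measurableSet_annulus d n))
    (fun k k' hkk' => (disjoint_scaleSet h2n (pairwise_disjoint_dyadicCube d ℓ hkk')).mono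
      Set.inter_subset_left Set.inter_subset_left)
    (fun k => Set.inter_subset_right) (ENNReal.ofReal t) hα0 hα1
  have hcard : (Fintype.card (Fin d → Fin (2 ^ ℓ)) : ℝ≥0∞) ^ (1 - α) =
      ENNReal.ofReal (2 ^ (d * (1 - α) * ℓ)) := by
    rw [← ENNReal.ofReal_natCast, ENNReal.ofReal_rpow_of_nonneg (by positivity) (by linarith)]
    simp only [Fintype.card_fun, Fintype.card_fin, Nat.cast_pow, Nat.cast_ofNat]
    rw [← pow_mul, ← Real.rpow_natCast, ← Real.rpow_mul zero_le_two]
    push_cast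
    ring_nf
  refine (mul_le_mul_right hpieces _).trans_eq ?_
  rw [hcard, ← ofReal_measureReal, ENNReal.ofReal_rpow_of_nonneg measureReal_nonneg hα0.le,
    ← ENNReal.ofReal_mul ht, ← ENNReal.ofReal_mul (by positivity), ← ENNReal.ofReal_min,
    ← ENNReal.ofReal_mul (by positivity), mul_min_of_nonneg _ _ (by positivity)]
  congr 2
  · ring
  · rw [sub_mul, Real.rpow_sub two_pos, Real.rpow_neg zero_le_two]
    field_simp

theorem exists_minGeomSum_cube_le {d : ℕ} (hd : 0 < d) {p α : ℝ} (hp : 0 < p) (hα0 : 0 < α)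
    (hα1 : α < 1) :
    ∃ K > 0, ∀ m T : ℝ, 0 ≤ m → m ≤ 1 → 2 ≤ T →
      minGeomSum p (d * (1 - α) - p) m (T ^ (-(1 / 2) : ℝ) * m ^ α) ≤
        ENNReal.ofReal (K * (if p = (1 - α) * d then Real.log T else 1) *
          min m ((T ^ (-(1 / 2) : ℝ)) ^ ((1 - max α (1 - p / d)) / (1 - α)) *
            m ^ max α (1 - p / d))) := by
  have hd' : (0 : ℝ) < d := Nat.cast_pos.2 hd
  have h1α : 0 < 1 - α := by linarith
  set γ := max α (1 - p / d)
  set θ := (1 - γ) / (1 - α)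
  have hθ : p / (p + max (d * (1 - α) - p) 0) = θ := by
    simpa only [sub_sub_cancel (1 : ℝ)] using div_add_max_mul_sub_eq hp hd' h1α
  have hγ : 1 - θ + α * θ = γ := by
    simp only [θ]
    field_simp
    ring
  have hif : d * (1 - α) - p = 0 ↔ p = (1 - α) * d := by
    constructor <;> intro h <;> linarith
  obtain ⟨K, hK, h⟩ := exists_minGeomSum_le (d * (1 - α) - p) hp (s := 1 / 2) (by norm_num)
  refine ⟨K, hK, fun m T hm0 hm1 hT => ?_⟩
  have hT0 : 0 < T := by linarith
  set u := T ^ (-(1 / 2) : ℝ)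
  have hxy : m ≤ u * m ^ α * T ^ (1 / 2 : ℝ) := by
    rw [mul_right_comm, ← Real.rpow_add hT0, neg_add_cancel, Real.rpow_zero, one_mul]
    exact Real.self_le_rpow_of_le_one hm0 hm1 hα1.le
  have hG : m ^ (1 - θ) * (u * m ^ α) ^ θ = u ^ θ * m ^ γ := by
    rw [Real.mul_rpow (by positivity) (by positivity), ← Real.rpow_mul hm0, mul_left_comm,
      ← Real.rpow_add' hm0 (by rw [hγ]; exact (hα0.trans_le (le_max_left _ _)).ne'), hγ]
  refine (h m (u * m ^ α) T hm0 (by positivity) hT hxy).trans_eq ?_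
  rw [hθ, hG]
  simp only [hif]

lemma two_rpow_mul_min_le_min {p q γ t m M : ℝ} (n : ℕ) (hγ : 0 ≤ γ) (ht : 0 ≤ t)
    (hm : 0 ≤ m) (hmM : m ≤ M * 2 ^ (-(q * n))) :
    2 ^ (p * n) * min m (t * m ^ γ) ≤
      min (M * 2 ^ (-((q - p) * n))) (t * M ^ γ * 2 ^ ((p - q * γ) * n)) := by
  have hM : 0 ≤ M := nonneg_of_mul_nonneg_left (hm.trans hmM) (by positivity)
  rw [mul_min_of_nonneg _ _ (by positivity)]
  refine min_le_min ?_ ?_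
  · calc 2 ^ (p * n) * m ≤ 2 ^ (p * n) * (M * 2 ^ (-(q * n))) := by gcongr
      _ = _ := by
          rw [mul_left_comm, ← Real.rpow_add two_pos]
          ring_nf
  · calc 2 ^ (p * n) * (t * m ^ γ) ≤ 2 ^ (p * n) * (t * (M * 2 ^ (-(q * n))) ^ γ) := by gcongr
      _ = _ := by
          rw [Real.mul_rpow hM (by positivity), ← Real.rpow_mul zero_le_two, mul_left_comm,
            mul_left_comm _ (M ^ γ), ← Real.rpow_add two_pos, ← mul_assoc]
          ring_nf

lemma le_rpow_mul_rpow_logb {M T γ : ℝ} (hM : 1 ≤ M) (hT : 2 ≤ T) (hγ : 0 ≤ γ) :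
    M ≤ M ^ γ * T ^ Real.logb 2 M := by
  calc M = 1 * 2 ^ Real.logb 2 M := by
        rw [one_mul, Real.rpow_logb two_pos (by norm_num) (by linarith)]
    _ ≤ M ^ γ * T ^ Real.logb 2 M := by
        gcongr
        · exact Real.one_le_rpow hM hγ
        · exact Real.logb_nonneg one_lt_two hM

theorem exists_minGeomSum_annulus_le {p q α γ M : ℝ} (hq : 0 < q) (hpq : p < q) (hα1 : α < 1)
    (hγ0 : 0 ≤ γ) (hγ1 : γ < 1) (hM : 1 ≤ M) :
    ∃ K > 0, ∀ T : ℝ, 2 ≤ T →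
      minGeomSum (q - p) (p - q * γ) M ((T ^ (-(1 / 2) : ℝ)) ^ ((1 - γ) / (1 - α)) * M ^ γ) ≤
        ENNReal.ofReal (K * (if γ * q = p then Real.log T else 1) *
          T ^ (-((1 - max γ (p / q)) / (2 * (1 - α))))) := by
  have h1γ : 0 < 1 - γ := by linarith
  set θ := (1 - γ) / (1 - α)
  set e := (q - p) / (q - p + max (p - q * γ) 0)
  have he0 : 0 ≤ e := div_nonneg (by linarith) (add_nonneg (by linarith) (le_max_right _ _))
  have hθe : -(1 / 2) * (θ * e) = -((1 - max γ (p / q)) / (2 * (1 - α))) := by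
    have he := div_add_max_mul_sub_eq (sub_pos.2 hpq) hq h1γ
    rw [sub_sub_cancel (1 : ℝ), show 1 - (q - p) / q = p / q by field_simp; ring,
      show q * (1 - γ) - (q - p) = p - q * γ by ring] at he
    rw [show e = _ from he]
    simp only [θ]
    field_simp
  have hif : p - q * γ = 0 ↔ γ * q = p := by
    constructor <;> intro h <;> linarith
  have hlogM : 0 ≤ Real.logb 2 M := Real.logb_nonneg one_lt_two hM
  obtain ⟨K, hK, h⟩ := exists_minGeomSum_le (p - q * γ) (sub_pos.2 hpq)
    (s := θ / 2 + Real.logb 2 M) (by positivity)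
  refine ⟨K * M, by positivity, fun T hT => ?_⟩
  have hT0 : 0 < T := by linarith
  have huθ : (T ^ (-(1 / 2) : ℝ)) ^ θ * T ^ (θ / 2) = 1 := by
    rw [← Real.rpow_mul hT0.le, ← Real.rpow_add hT0, show -(1 / 2) * θ + θ / 2 = 0 by ring,
      Real.rpow_zero]
  have hxy : M ≤ (T ^ (-(1 / 2) : ℝ)) ^ θ * M ^ γ * T ^ (θ / 2 + Real.logb 2 M) := by
    calc M ≤ M ^ γ * T ^ Real.logb 2 M := le_rpow_mul_rpow_logb hM hT hγ0
      _ = _ := by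
          rw [Real.rpow_add hT0]
          linear_combination (-(M ^ γ * T ^ Real.logb 2 M)) * huθ
  refine (h M _ T (by linarith) (by positivity) hT hxy).trans (ENNReal.ofReal_le_ofReal ?_)
  simp only [hif]
  have hL : 0 ≤ if γ * q = p then Real.log T else 1 := ite_log_nonneg hT
  calc _ ≤ K * (if γ * q = p then Real.log T else 1) *
        (M * (T ^ (-(1 / 2) : ℝ)) ^ (θ * e)) := by
        gcongr
        exact (min_le_right _ _).trans (rpow_one_sub_mul_mul_rpow_le hM (by positivity) hγ1.le he0)
    _ = _ := by
        rw [← Real.rpow_mul hT0.le, hθe]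
        ring

theorem exists_annulus_term_le {d : ℕ} (hd : 0 < d) (μ : Measure (EuclideanSpace ℝ (Fin d)))
    [IsProbabilityMeasure μ] {p q α M : ℝ} (hp : 0 < p) (hα0 : 0 < α) (hα1 : α < 1)
    (hM : ∀ n : ℕ, μ.real (annulus d n) ≤ M * 2 ^ (-(q * n))) :
    ∃ K > 0, ∀ T : ℝ, 2 ≤ T → ∀ n : ℕ,
      ENNReal.ofReal ((2 : ℝ) ^ (p * n)) *
        ∑' ℓ : ℕ, ENNReal.ofReal ((2 : ℝ) ^ (-(p * ℓ))) *
          ∑ k : Fin d → Fin (2 ^ ℓ),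
            min (μ (scaleSet ((2 : ℝ) ^ n) (dyadicCube d ℓ k) ∩ annulus d n))
              (ENNReal.ofReal (T ^ (-(1 / 2) : ℝ)) *
                μ (scaleSet ((2 : ℝ) ^ n) (dyadicCube d ℓ k) ∩ annulus d n) ^ α) ≤
      ENNReal.ofReal (K * (if p = (1 - α) * d then Real.log T else 1)) *
        ENNReal.ofReal (min (M * 2 ^ (-((q - p) * n)))
          ((T ^ (-(1 / 2) : ℝ)) ^ ((1 - max α (1 - p / d)) / (1 - α)) * M ^ max α (1 - p / d) *
            2 ^ ((p - q * max α (1 - p / d)) * n))) := by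
  obtain ⟨K, hK, hinner⟩ := exists_minGeomSum_cube_le hd hp hα0 hα1
  refine ⟨K, hK, fun T hT n => ?_⟩
  have hL := ite_log_nonneg (P := p = (1 - α) * d) hT
  calc _ ≤ ENNReal.ofReal ((2 : ℝ) ^ (p * n)) * minGeomSum p (d * (1 - α) - p)
        (μ.real (annulus d n)) (T ^ (-(1 / 2) : ℝ) * μ.real (annulus d n) ^ α) := by
        gcongr
        exact tsum_sum_min_measure_le_minGeomSum μ p hα0 hα1.le (by positivity) n
    _ ≤ _ := by
        grw [hinner _ T measureReal_nonneg measureReal_le_one hT]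
        rw [← ENNReal.ofReal_mul (by positivity), ← ENNReal.ofReal_mul (by positivity),
          mul_left_comm]
        refine ENNReal.ofReal_le_ofReal (mul_le_mul_of_nonneg_left ?_ (by positivity))
        exact two_rpow_mul_min_le_min n (hα0.le.trans (le_max_left _ _)) (by positivity)
          measureReal_nonneg (hM n)

/-- **Lemma 3.1.**  Let `μ` be a probability measure on `ℝ^d` with `μ(|·|^q) < ∞` for some
`q > p > 0` and let `α ∈ (0,1)`.  With `γ := max{α, 1 - p/d}`, the quantity
`𝒦_α(T) = ∑_n 2^{pn} ∑_ℓ 2^{-pℓ} ∑_{F∈𝒫_ℓ} min{μ(2ⁿF ∩ B_n), T^{-1/2} μ(2ⁿF ∩ B_n)^α}`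
satisfies `𝒦_α(T) ≤ C T^{-(1 - max{γ, p/q})/(2(1-α))} · A · B` for all `T > 2`. -/
theorem dyadic_minimum_sum_bound {d : ℕ} (hd : 0 < d)
    (μ : Measure (EuclideanSpace ℝ (Fin d))) [IsProbabilityMeasure μ]
    (p q α : ℝ) (hp : 0 < p) (hq : p < q) (hα0 : 0 < α) (hα1 : α < 1)
    (hmom : ∫⁻ x, ENNReal.ofReal (‖x‖ ^ q) ∂μ < ⊤) :
    ∃ C > (0:ℝ), ∀ T : ℝ, 2 < T →
      (∑' n : ℕ, ENNReal.ofReal ((2 : ℝ) ^ (p * n)) *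
        ∑' ℓ : ℕ, ENNReal.ofReal ((2 : ℝ) ^ (-(p * ℓ))) *
          ∑ k : Fin d → Fin (2 ^ ℓ),
            min (μ (scaleSet ((2:ℝ) ^ n) (dyadicCube d ℓ k) ∩ annulus d n))
              (ENNReal.ofReal (T ^ (-(1/2) : ℝ)) *
                μ (scaleSet ((2:ℝ) ^ n) (dyadicCube d ℓ k) ∩ annulus d n) ^ α)) ≤
      ENNReal.ofReal (C *
        T ^ (-((1 - max (max α (1 - p / (d : ℝ))) (p / q)) / (2 * (1 - α)))) *
        (if max α (1 - p / (d : ℝ)) * q = p then Real.log T else 1) *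
        (if p = (1 - α) * (d : ℝ) then Real.log T else 1)) := by
  have hd' : (0 : ℝ) < d := Nat.cast_pos.2 hd
  set γ := max α (1 - p / d)
  have hγ1 : γ < 1 := max_lt hα1 (by linarith [show 0 < p / d by positivity])
  obtain ⟨K₁, hK₁, hterm⟩ :=
    exists_annulus_term_le hd μ hp hα0 hα1 (measureReal_annulus_le μ (hp.trans hq) hmom)
  obtain ⟨K₂, hK₂, houter⟩ := exists_minGeomSum_annulus_le (hp.trans hq) hq hα1
    (hα0.le.trans (le_max_left _ _)) hγ1 (le_max_left 1 _)
  refine ⟨K₁ * K₂, by positivity, fun T hT => ?_⟩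
  set B := if p = (1 - α) * (d : ℝ) then Real.log T else 1
  have hB : 0 ≤ B := ite_log_nonneg hT.le
  calc _ ≤ ∑' n : ℕ, ENNReal.ofReal (K₁ * B) * ENNReal.ofReal (min _ _) :=
        ENNReal.tsum_le_tsum (hterm T hT.le)
    _ = ENNReal.ofReal (K₁ * B) * minGeomSum (q - p) (p - q * γ) _ _ := ENNReal.tsum_mul_left
    _ ≤ ENNReal.ofReal (K₁ * B) * ENNReal.ofReal (K₂ * (if γ * q = p then Real.log T else 1) *
          T ^ (-((1 - max γ (p / q)) / (2 * (1 - α))))) := by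
        gcongr
        exact houter T hT.le
    _ = _ := by
        rw [← ENNReal.ofReal_mul (by positivity)]
        congr 1
        ring
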